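/- Let σ = 1 and consider γ*(σ) = γ* ∈ [4, γ**), where γ** is the unique positive root of 2 + 4z - 2z^{3/2} = 0. Then for all s, z ∈ (0, γ*], G(s,z) ≥ G(γ*, γ*) > G(γ**, γ**) = 0, where G(s,z) = (2 + 4s - s^{3/2})/(1+s) - z^{3/2}/(1+z); in particular G is uniformly positive on (0, γ*]². -/
import Mathlib

private lemma rpow32 (x : ℝ) (hx : 0 ≤ x) : x ^ ((3:ℝ)/2) = Real.sqrt x ^ 3 := by
  rw [Real.sqrt_eq_rpow, ← Real.rpow_natCast (x ^ ((1:ℝ)/2)) 3, ← Real.rpow_mul hx]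
  norm_num

private lemma gmono {a b : ℝ} (ha : 0 ≤ a) (hab : a ≤ b) :
    a ^ ((3:ℝ)/2) / (1 + a) ≤ b ^ ((3:ℝ)/2) / (1 + b) := by
  have hb : 0 ≤ b := ha.trans hab
  rw [rpow32 a ha, rpow32 b hb]
  set u := Real.sqrt a with hu
  set v := Real.sqrt b with hv
  have hu0 : 0 ≤ u := Real.sqrt_nonneg a
  have hv0 : 0 ≤ v := Real.sqrt_nonneg b
  have huv : u ≤ v := Real.sqrt_le_sqrt hab
  have hau : u ^ 2 = a := Real.sq_sqrt ha
  have hbv : v ^ 2 = b := Real.sq_sqrt hb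
  rw [div_le_div_iff₀ (by nlinarith) (by nlinarith), ← hau, ← hbv]
  nlinarith [mul_nonneg (mul_nonneg (sub_nonneg.2 huv) hu0) hu0,
    mul_nonneg (mul_nonneg (mul_nonneg (sub_nonneg.2 huv) hu0) hv0) (mul_nonneg hu0 hv0),
    mul_nonneg (mul_nonneg (sub_nonneg.2 huv) hv0) hv0,
    mul_nonneg (mul_nonneg (sub_nonneg.2 huv) hu0) hv0]

private lemma hmono {s γ : ℝ} (hs : 0 ≤ s) (hsγ : s ≤ γ) (hγ : 4 ≤ γ) :
    (2 + 4*γ - γ ^ ((3:ℝ)/2)) / (1 + γ) ≤ (2 + 4*s - s ^ ((3:ℝ)/2)) / (1 + s) := by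
  have hγ0 : 0 ≤ γ := hs.trans hsγ
  rw [rpow32 s hs, rpow32 γ hγ0]
  set u := Real.sqrt s with hu
  set v := Real.sqrt γ with hv
  have hu0 : 0 ≤ u := Real.sqrt_nonneg s
  have hv0 : 0 ≤ v := Real.sqrt_nonneg γ
  have huv : u ≤ v := Real.sqrt_le_sqrt hsγ
  have hau : u ^ 2 = s := Real.sq_sqrt hs
  have hbv : v ^ 2 = γ := Real.sq_sqrt hγ0
  have hv2 : 2 ≤ v := by
    nlinarith
  rw [div_le_div_iff₀ (by nlinarith) (by nlinarith), ← hau, ← hbv]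
  -- need (2+4γ-v³)(1+s) ≤ (2+4s-u³)(1+γ)
  -- i.e. (v-u)·(u²+uv+v²+u²v²-2u-2v) ≥ 0
  nlinarith [mul_nonneg (sub_nonneg.2 huv) (mul_nonneg hv0 (by linarith : (0:ℝ) ≤ v - 2)),
    mul_nonneg (mul_nonneg (sub_nonneg.2 huv) hu0) (by linarith : (0:ℝ) ≤ u + v - 2),
    mul_nonneg (mul_nonneg (sub_nonneg.2 huv) hu0)
      (mul_nonneg hu0 (mul_nonneg hv0 hv0))]

/-- uniform positivity of the σ = 1 BDF2 stability function G on (0,γ*]²,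
where 4 ≤ γ* < γ** and γ** is the unique positive root of 2 + 4z - 2z^{3/2} = 0. -/
theorem stmt_19 (γstar γss : ℝ)
    (G : ℝ → ℝ → ℝ)
    (hG : ∀ s z : ℝ, G s z =
      (2 + 4*s - s ^ ((3:ℝ)/2)) / (1 + s) - z ^ ((3:ℝ)/2) / (1 + z))
    (hγss : 0 < γss) (hroot : 2 + 4*γss - 2 * γss ^ ((3:ℝ)/2) = 0)
    (huniq : ∀ z : ℝ, 0 < z → 2 + 4*z - 2 * z ^ ((3:ℝ)/2) = 0 → z = γss)
    (hγstar : 4 ≤ γstar) (hγstarlt : γstar < γss) :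
    (∀ s z : ℝ, 0 < s → s ≤ γstar → 0 < z → z ≤ γstar →
        G s z ≥ G γstar γstar) ∧
    G γstar γstar > G γss γss ∧ G γss γss = 0 := by
  have hss0 : G γss γss = 0 := by
    rw [hG]
    have h1 : (1:ℝ) + γss ≠ 0 := by positivity
    field_simp
    linarith
  -- positivity of f at γstar via IVT + uniqueness
  have hfpos : 0 < 2 + 4*γstar - 2 * γstar ^ ((3:ℝ)/2) := by
    by_contra h
    push_neg at h
    -- consider F z = 2 + 4z - 2 (√z)^3, continuous
    set F : ℝ → ℝ := fun z => 2 + 4*z - 2 * Real.sqrt z ^ 3 with hF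
    have hcont : ContinuousOn F (Set.Icc 1 γstar) := by
      fun_prop
    have hF1 : F 1 = 4 := by simp [hF]
    have hFγ : F γstar ≤ 0 := by
      have := rpow32 γstar (by linarith)
      simp only [hF]
      linarith [this ▸ h]
    have h1γ : (1:ℝ) ≤ γstar := by linarith
    have : (0:ℝ) ∈ Set.Icc (F γstar) (F 1) := ⟨hFγ, by rw [hF1]; norm_num⟩
    obtain ⟨c, hc, hFc⟩ := intermediate_value_Icc' h1γ hcont this
    have hc0 : 0 < c := by linarith [hc.1]
    have hfc : 2 + 4*c - 2 * c ^ ((3:ℝ)/2) = 0 := by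
      rw [rpow32 c hc0.le]; simpa [hF] using hFc
    have := huniq c hc0 hfc
    linarith [hc.2, this ▸ hγstarlt]
  have hstarpos : 0 < G γstar γstar := by
    rw [hG]
    have h1 : (0:ℝ) < 1 + γstar := by linarith
    rw [div_sub_div_same, div_pos_iff]
    left
    constructor
    · linarith
    · exact h1
  refine ⟨?_, by linarith, hss0⟩
  intro s z hs hsγ hz hzγ
  rw [hG, hG]
  have h1 := hmono hs.le hsγ hγstar
  have h2 := gmono hz.le hzγ
  linarith
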